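/- Let $X$ be a metric space, $\mu$ a Borel probability measure with the Hardy–Littlewood property, and $T$ a $\mu$-preserving transformation. If $f\in L^\infty(\mu)$ satisfies $\mathbb{E}[f\mid\mathfrak{I}]=0$ (where $\mathfrak{I}$ is the $T$-invariant $\sigma$-algebra), then $U_{r,k}f(x) := \mu(B(x,r))^{-1}\int_{B(x,r)} \frac{1}{k}\sum_{j=0}^{k-1} f\circ T^j\, d\mu \to 0$ for $\mu$-almost every $x$ as $r\searrow 0$, $k\to\infty$ jointly. -/

import Mathlib

/-!
Write `A_k` for the Birkhoff averages and replace `f` by a bounded measurable version `φ`.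
Since `𝔼[φ | 𝔍] = 0`, `φ` is orthogonal to the Koopman-invariant functions, so the mean ergodic
theorem makes `‖A_K φ‖₁` as small as we like. Through the maximal ergodic inequality this makes
the ergodic maximal function `Gₙ` of `A_{Kₙ} φ` satisfy `∫ Gₙ ≤ 4⁻ⁿ`, so `H = ∑ 2ⁿ Gₙ` is
integrable. As `A_k φ` and `A_k A_K φ` differ by at most `2Kc/k` everywhere,
`|A_k φ| ≤ 2⁻ⁿ H + o(1)` as `k → ∞`, uniformly in space. Averaging over balls,
`|U_{r,k} f x| ≤ 2⁻ⁿ M H x + o(1)` with `M` the Hardy–Littlewood maximal function, which is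
finite a.e. by the weak type (1,1) bound; letting `n → ∞` finishes the proof, even uniformly
in `r`.
-/
open MeasureTheory Metric Filter Set ENNReal
noncomputable section

/-- The σ-algebra of T-invariant measurable sets. -/
def invSigma {X : Type*} [MeasurableSpace X] (T : X → X) : MeasurableSpace X where
  MeasurableSet' s := MeasurableSet s ∧ T ⁻¹' s = s
  measurableSet_empty := ⟨MeasurableSet.empty, rfl⟩
  measurableSet_compl s hs := ⟨hs.1.compl, by rw [Set.preimage_compl, hs.2]⟩
  measurableSet_iUnion f hf := ⟨MeasurableSet.iUnion fun i => (hf i).1, by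
    simp only [Set.preimage_iUnion]; exact Set.iUnion_congr fun i => (hf i).2⟩

/-- The (centered) Hardy–Littlewood property: the centered maximal operator is of
weak type (1,1). -/
def HLProp {X : Type*} [PseudoMetricSpace X] [MeasurableSpace X] (μ : Measure X) : Prop :=
  ∃ C : ℝ≥0∞, 1 ≤ C ∧ ∀ f : X → ℝ, Integrable f μ → ∀ ε : ℝ≥0∞, 0 < ε →
    μ {x | ε ≤ ⨆ (r : ℝ) (_ : 0 < r),
        (μ (ball x r))⁻¹ * ∫⁻ y in ball x r, ‖f y‖₊ ∂μ}
      ≤ C / ε * ∫⁻ y, ‖f y‖₊ ∂μ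

open Function Topology

section Birkhoff

variable {X : Type*} {T : X → X} {φ : X → ℝ} {c : ℝ}

lemma abs_birkhoffSum_le (hφ : ∀ x, |φ x| ≤ c) (n : ℕ) (x : X) :
    |birkhoffSum T φ n x| ≤ n * c :=
  calc |birkhoffSum T φ n x| ≤ ∑ i ∈ Finset.range n, |φ (T^[i] x)| :=
        Finset.abs_sum_le_sum_abs _ _
    _ ≤ ∑ _i ∈ Finset.range n, c := Finset.sum_le_sum fun i _ => hφ (T^[i] x)
    _ = n * c := by simp

lemma abs_birkhoffAverage_le (hφ : ∀ x, |φ x| ≤ c) (n : ℕ) (x : X) :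
    |birkhoffAverage ℝ T φ n x| ≤ c := by
  rcases n.eq_zero_or_pos with rfl | hn
  · simpa using (abs_nonneg _).trans (hφ x)
  · rw [birkhoffAverage, smul_eq_mul, abs_mul, abs_inv, Nat.abs_cast,
      inv_mul_le_iff₀ (by positivity)]
    exact abs_birkhoffSum_le hφ n x

lemma abs_birkhoffAverage_le_birkhoffAverage_abs (n : ℕ) (x : X) :
    |birkhoffAverage ℝ T φ n x| ≤ birkhoffAverage ℝ T (fun y => |φ y|) n x := by
  simp only [birkhoffAverage, birkhoffSum, smul_eq_mul, abs_mul, abs_inv, Nat.abs_cast]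
  gcongr
  exact Finset.abs_sum_le_sum_abs _ _

lemma abs_birkhoffAverage_iterate_sub_le (hφ : ∀ x, |φ x| ≤ c) (k i : ℕ) (x : X) :
    |birkhoffAverage ℝ T φ k (T^[i] x) - birkhoffAverage ℝ T φ k x| ≤ 2 * i * c / k := by
  induction i with
  | zero => simp
  | succ i ih =>
    have hstep : |birkhoffAverage ℝ T φ k (T (T^[i] x)) - birkhoffAverage ℝ T φ k (T^[i] x)|
        ≤ 2 * c / k := by
      rw [← Real.dist_eq, dist_birkhoffAverage_apply_birkhoffAverage, Real.dist_eq]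
      gcongr
      linarith [abs_sub (φ (T^[k] (T^[i] x))) (φ (T^[i] x)), hφ (T^[k] (T^[i] x)), hφ (T^[i] x)]
    rw [iterate_succ_apply']
    calc _ ≤ 2 * c / k + 2 * i * c / k := (abs_sub_le _ _ _).trans (add_le_add hstep ih)
      _ = 2 * ↑(i + 1) * c / k := by push_cast; ring

lemma birkhoffAverage_birkhoffAverage (k K : ℕ) (x : X) :
    birkhoffAverage ℝ T (birkhoffAverage ℝ T φ K) k x
      = (K : ℝ)⁻¹ * ∑ i ∈ Finset.range K, birkhoffAverage ℝ T φ k (T^[i] x) := by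
  simp only [birkhoffAverage, birkhoffSum, smul_eq_mul, Finset.mul_sum,
    ← iterate_add_apply]
  rw [Finset.sum_comm]
  refine Finset.sum_congr rfl fun i _ => Finset.sum_congr rfl fun j _ => ?_
  rw [add_comm]; ring

lemma abs_birkhoffAverage_birkhoffAverage_sub_le (hφ : ∀ x, |φ x| ≤ c) {K : ℕ} (hK : K ≠ 0)
    (k : ℕ) (x : X) :
    |birkhoffAverage ℝ T (birkhoffAverage ℝ T φ K) k x - birkhoffAverage ℝ T φ k x|
      ≤ 2 * K * c / k := by
  have hK' : (0 : ℝ) < K := by positivity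
  have hc : 0 ≤ c := (abs_nonneg _).trans (hφ x)
  have hsum : (K : ℝ)⁻¹ * ∑ i ∈ Finset.range K, birkhoffAverage ℝ T φ k (T^[i] x)
        - birkhoffAverage ℝ T φ k x
      = (K : ℝ)⁻¹ * ∑ i ∈ Finset.range K,
          (birkhoffAverage ℝ T φ k (T^[i] x) - birkhoffAverage ℝ T φ k x) := by
    rw [Finset.sum_sub_distrib, Finset.sum_const, Finset.card_range, nsmul_eq_mul]
    field_simp
  rw [birkhoffAverage_birkhoffAverage, hsum, abs_mul, abs_inv, Nat.abs_cast,
    inv_mul_le_iff₀ hK']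
  calc _ ≤ ∑ i ∈ Finset.range K,
          |birkhoffAverage ℝ T φ k (T^[i] x) - birkhoffAverage ℝ T φ k x| :=
        Finset.abs_sum_le_sum_abs _ _
    _ ≤ ∑ _i ∈ Finset.range K, 2 * K * c / k := Finset.sum_le_sum fun i hi =>
        (abs_birkhoffAverage_iterate_sub_le hφ k i x).trans <| by
          gcongr; exact (Finset.mem_range.mp hi).le
    _ = K * (2 * K * c / k) := by simp

/-- Including the empty sum `S_0 = 0` makes it nonnegative, as Garsia's argument needs. -/
def maxBirkhoffSum (T : X → X) (φ : X → ℝ) (N : ℕ) (x : X) : ℝ :=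
  (Finset.range (N + 1)).sup' Finset.nonempty_range_add_one fun n => birkhoffSum T φ n x

lemma birkhoffSum_le_maxBirkhoffSum {n N : ℕ} (hn : n ≤ N) (x : X) :
    birkhoffSum T φ n x ≤ maxBirkhoffSum T φ N x :=
  Finset.le_sup' (fun n => birkhoffSum T φ n x) (Finset.mem_range.mpr (Nat.lt_succ_of_le hn))

lemma maxBirkhoffSum_nonneg (N : ℕ) (x : X) : 0 ≤ maxBirkhoffSum T φ N x := by
  simpa using birkhoffSum_le_maxBirkhoffSum (T := T) (φ := φ) (Nat.zero_le N) x

lemma zero_lt_maxBirkhoffSum_iff {N : ℕ} {x : X} :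
    0 < maxBirkhoffSum T φ N x ↔ ∃ n ≤ N, 0 < birkhoffSum T φ n x := by
  simp [maxBirkhoffSum, Finset.lt_sup'_iff]

lemma maxBirkhoffSum_le (hφ : ∀ x, |φ x| ≤ c) (N : ℕ) (x : X) :
    maxBirkhoffSum T φ N x ≤ N * c :=
  Finset.sup'_le _ _ fun n hn => (le_abs_self _).trans <| (abs_birkhoffSum_le hφ n x).trans <| by
    gcongr
    · exact (abs_nonneg _).trans (hφ x)
    · exact Nat.lt_succ_iff.mp (Finset.mem_range.mp hn)

/-- The maximum is attained at some `S_n` with `n ≥ 1`, and `S_n x = φ x + S_{n-1} (T x)`. -/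
lemma maxBirkhoffSum_le_add {N : ℕ} {x : X} (hx : 0 < maxBirkhoffSum T φ N x) :
    maxBirkhoffSum T φ N x ≤ φ x + maxBirkhoffSum T φ N (T x) := by
  obtain ⟨n, hn, hmax⟩ := Finset.exists_mem_eq_sup' Finset.nonempty_range_add_one
    fun n => birkhoffSum T φ n x
  rw [maxBirkhoffSum, hmax] at hx ⊢
  obtain ⟨m, rfl⟩ : ∃ m, n = m + 1 :=
    Nat.exists_eq_succ_of_ne_zero fun h => by simp [h] at hx
  rw [birkhoffSum_succ']
  gcongr
  exact birkhoffSum_le_maxBirkhoffSum (by simp at hn; omega) _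

def birkhoffMaximal (T : X → X) (φ : X → ℝ) (x : X) : ℝ≥0∞ :=
  ⨆ n, ‖birkhoffAverage ℝ T φ n x‖ₑ

lemma birkhoffMaximal_le (hφ : ∀ x, |φ x| ≤ c) (x : X) :
    birkhoffMaximal T φ x ≤ ENNReal.ofReal c :=
  iSup_le fun n => by
    rw [Real.enorm_eq_ofReal_abs]
    exact ENNReal.ofReal_le_ofReal (abs_birkhoffAverage_le hφ n x)

lemma enorm_birkhoffAverage_le_birkhoffMaximal_add (hφ : ∀ x, |φ x| ≤ c) {K : ℕ} (hK : K ≠ 0)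
    (k : ℕ) (x : X) :
    ‖birkhoffAverage ℝ T φ k x‖ₑ
      ≤ birkhoffMaximal T (birkhoffAverage ℝ T φ K) x + ENNReal.ofReal (2 * K * c / k) := by
  set a := birkhoffAverage ℝ T φ k x
  set b := birkhoffAverage ℝ T (birkhoffAverage ℝ T φ K) k x
  have hclose : |b - a| ≤ 2 * K * c / k := abs_birkhoffAverage_birkhoffAverage_sub_le hφ hK k x
  calc ‖a‖ₑ ≤ ENNReal.ofReal (|b| + 2 * K * c / k) := by
        rw [Real.enorm_eq_ofReal_abs]
        gcongr
        linarith [abs_sub_abs_le_abs_sub a b, abs_sub_comm a b]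
    _ ≤ ‖b‖ₑ + ENNReal.ofReal (2 * K * c / k) := by
        rw [Real.enorm_eq_ofReal_abs]
        exact ENNReal.ofReal_add_le
    _ ≤ _ := by
        gcongr
        exact le_iSup (fun m => ‖birkhoffAverage ℝ T (birkhoffAverage ℝ T φ K) m x‖ₑ) k

end Birkhoff

section MaximalErgodic

variable {X : Type*} [MeasurableSpace X] {μ : Measure X} {T : X → X} {φ : X → ℝ} {c : ℝ}

lemma measurable_birkhoffSum (hT : Measurable T) (hφ : Measurable φ) (n : ℕ) :
    Measurable (birkhoffSum T φ n) :=
  Finset.measurable_sum _ fun i _ => hφ.comp (hT.iterate i)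

lemma measurable_birkhoffAverage (hT : Measurable T) (hφ : Measurable φ) (n : ℕ) :
    Measurable (birkhoffAverage ℝ T φ n) :=
  (measurable_birkhoffSum hT hφ n).const_smul ((n : ℝ)⁻¹)

lemma measurable_birkhoffMaximal (hT : Measurable T) (hφ : Measurable φ) :
    Measurable (birkhoffMaximal T φ) :=
  Measurable.iSup fun n => (measurable_birkhoffAverage hT hφ n).enorm

lemma measurable_maxBirkhoffSum (hT : Measurable T) (hφ : Measurable φ) (N : ℕ) :
    Measurable (maxBirkhoffSum T φ N) :=
  Finset.measurable_range_sup'' fun n _ => measurable_birkhoffSum hT hφ n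

/-- The maximal ergodic lemma, with Garsia's proof. -/
lemma setIntegral_setOf_zero_lt_maxBirkhoffSum_nonneg [IsFiniteMeasure μ]
    (hT : MeasurePreserving T μ μ) (hφm : Measurable φ) (hφ : ∀ x, |φ x| ≤ c) (N : ℕ) :
    0 ≤ ∫ x in {x | 0 < maxBirkhoffSum T φ N x}, φ x ∂μ := by
  set M := maxBirkhoffSum T φ N
  set E := {x | 0 < M x}
  have hMm : Measurable M := measurable_maxBirkhoffSum hT.measurable hφm N
  have hM : Integrable M μ := Integrable.of_bound hMm.aestronglyMeasurable (N * c) <|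
    ae_of_all _ fun x => by
      rw [Real.norm_of_nonneg (maxBirkhoffSum_nonneg N x)]
      exact maxBirkhoffSum_le hφ N x
  have hMT : ∫ x, M (T x) ∂μ = ∫ x, M x ∂μ := by
    rw [← integral_map hT.aemeasurable (by rw [hT.map_eq]; exact hMm.aestronglyMeasurable),
      hT.map_eq]
  have hle : ∀ x, M x - M (T x) ≤ E.indicator φ x := by
    intro x
    by_cases hx : x ∈ E
    · rw [indicator_of_mem hx]
      linarith [maxBirkhoffSum_le_add hx]
    · rw [indicator_of_notMem hx]
      linarith [not_lt.mp (show ¬ 0 < M x from hx), maxBirkhoffSum_nonneg (T := T) (φ := φ) N (T x)]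
  have hMT' : Integrable (fun x => M (T x)) μ := hT.integrable_comp_of_integrable hM
  calc (0 : ℝ) = ∫ x, (M x - M (T x)) ∂μ := by rw [integral_sub hM hMT', hMT, sub_self]
    _ ≤ ∫ x, E.indicator φ x ∂μ := integral_mono (hM.sub hMT')
        ((Integrable.of_bound hφm.aestronglyMeasurable c (ae_of_all _ hφ)).indicator
          (measurableSet_lt measurable_const hMm)) hle
    _ = ∫ x in E, φ x ∂μ := integral_indicator (measurableSet_lt measurable_const hMm)


lemma ofReal_mul_measure_setOf_lt_birkhoffAverage_le [IsFiniteMeasure μ]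
    (hT : MeasurePreserving T μ μ) (hφm : Measurable φ) (hφ : ∀ x, |φ x| ≤ c) {t : ℝ}
    (ht : 0 < t) :
    ENNReal.ofReal t * μ {x | ∃ n, t < birkhoffAverage ℝ T φ n x} ≤ ∫⁻ x, ‖φ x‖ₑ ∂μ := by
  set ψ : X → ℝ := fun x => φ x - t
  have hψ : ∀ x, |ψ x| ≤ c + t := fun x =>
    (abs_sub _ _).trans (by rw [abs_of_pos ht]; linarith [hφ x])
  -- `S_n ψ = n (A_n φ - t)`, positive exactly when `t < A_n φ` (also for `n = 0`, as `A_0 φ = 0`).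
  have hpos : ∀ n x, 0 < birkhoffSum T ψ n x ↔ t < birkhoffAverage ℝ T φ n x := by
    intro n x
    rcases n.eq_zero_or_pos with rfl | hn
    · simp [ht.le]
    have hS : birkhoffSum T ψ n x = n * (birkhoffAverage ℝ T φ n x - t) := by
      simp only [ψ, birkhoffAverage, birkhoffSum, Finset.sum_sub_distrib, Finset.sum_const,
        Finset.card_range, nsmul_eq_mul, smul_eq_mul]
      field_simp
    rw [hS, mul_pos_iff_of_pos_left (by positivity), sub_pos]
  set E : ℕ → Set X := fun N => {x | 0 < maxBirkhoffSum T ψ N x}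
  have hE : {x | ∃ n, t < birkhoffAverage ℝ T φ n x} = ⋃ N, E N := by
    ext x
    simp only [E, mem_ofPred_eq, mem_iUnion, zero_lt_maxBirkhoffSum_iff, hpos]
    exact ⟨fun ⟨n, hn⟩ => ⟨n, n, le_rfl, hn⟩, fun ⟨_, n, _, hn⟩ => ⟨n, hn⟩⟩
  have hEmono : Monotone E := fun N N' h x hx => by
    obtain ⟨n, hn, hx⟩ := zero_lt_maxBirkhoffSum_iff.mp hx
    exact zero_lt_maxBirkhoffSum_iff.mpr ⟨n, hn.trans h, hx⟩
  rw [hE, hEmono.measure_iUnion, ENNReal.mul_iSup]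
  refine iSup_le fun N => ?_
  have hφi : Integrable φ μ := Integrable.of_bound hφm.aestronglyMeasurable c (ae_of_all _ hφ)
  have hgarsia : 0 ≤ ∫ x in E N, (φ x - t) ∂μ :=
    setIntegral_setOf_zero_lt_maxBirkhoffSum_nonneg hT (hφm.sub measurable_const) hψ N
  rw [integral_sub hφi.integrableOn (integrable_const t), setIntegral_const, smul_eq_mul,
    sub_nonneg, measureReal_def] at hgarsia
  calc ENNReal.ofReal t * μ (E N) = ENNReal.ofReal ((μ (E N)).toReal * t) := by
        rw [ENNReal.ofReal_mul ENNReal.toReal_nonneg, ENNReal.ofReal_toReal (measure_ne_top _ _),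
          mul_comm]
    _ ≤ ‖∫ x in E N, φ x ∂μ‖ₑ := (ENNReal.ofReal_le_ofReal hgarsia).trans (Real.ofReal_le_enorm _)
    _ ≤ ∫⁻ x in E N, ‖φ x‖ₑ ∂μ := enorm_integral_le_lintegral_enorm _
    _ ≤ ∫⁻ x, ‖φ x‖ₑ ∂μ := setLIntegral_le_lintegral _ _

lemma ofReal_mul_lintegral_birkhoffMaximal_le [IsProbabilityMeasure μ]
    (hT : MeasurePreserving T μ μ) (hφm : Measurable φ) (hφ : ∀ x, |φ x| ≤ c) {t : ℝ}
    (ht : 0 < t) :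
    ENNReal.ofReal t * ∫⁻ x, birkhoffMaximal T φ x ∂μ
      ≤ ENNReal.ofReal t ^ 2 + ENNReal.ofReal c * ∫⁻ x, ‖φ x‖ₑ ∂μ := by
  set S := {x | ENNReal.ofReal t < birkhoffMaximal T φ x}
  have hS : MeasurableSet S :=
    measurableSet_lt measurable_const (measurable_birkhoffMaximal hT.measurable hφm)
  have hle : ∀ x,
      birkhoffMaximal T φ x ≤ ENNReal.ofReal t + S.indicator (fun _ => ENNReal.ofReal c) x := by
    intro x
    by_cases hx : x ∈ S
    · rw [indicator_of_mem hx]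
      exact le_add_left (birkhoffMaximal_le hφ x)
    · rw [indicator_of_notMem hx, add_zero]
      exact not_lt.mp hx
  have hSsub : S ⊆ {x | ∃ n, t < birkhoffAverage ℝ T (fun y => |φ y|) n x} := by
    intro x hx
    obtain ⟨n, hn⟩ := lt_iSup_iff.mp (show ENNReal.ofReal t < birkhoffMaximal T φ x from hx)
    rw [Real.enorm_eq_ofReal_abs, ENNReal.ofReal_lt_ofReal_iff'] at hn
    exact ⟨n, hn.1.trans_le (abs_birkhoffAverage_le_birkhoffAverage_abs n x)⟩
  have hweak : ENNReal.ofReal t * μ S ≤ ∫⁻ x, ‖φ x‖ₑ ∂μ := by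
    calc ENNReal.ofReal t * μ S
        ≤ ENNReal.ofReal t * μ {x | ∃ n, t < birkhoffAverage ℝ T (fun y => |φ y|) n x} := by
          gcongr
      _ ≤ ∫⁻ x, ‖|φ x|‖ₑ ∂μ := ofReal_mul_measure_setOf_lt_birkhoffAverage_le hT hφm.abs
          (fun x => (abs_abs (φ x)).trans_le (hφ x)) ht
      _ = ∫⁻ x, ‖φ x‖ₑ ∂μ := by simp
  calc ENNReal.ofReal t * ∫⁻ x, birkhoffMaximal T φ x ∂μ
      ≤ ENNReal.ofReal t * (ENNReal.ofReal t + ENNReal.ofReal c * μ S) := by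
        gcongr
        refine (lintegral_mono hle).trans_eq ?_
        rw [lintegral_add_left measurable_const, lintegral_const, lintegral_indicator_const hS,
          measure_univ, mul_one]
    _ = ENNReal.ofReal t ^ 2 + ENNReal.ofReal c * (ENNReal.ofReal t * μ S) := by ring
    _ ≤ ENNReal.ofReal t ^ 2 + ENNReal.ofReal c * ∫⁻ x, ‖φ x‖ₑ ∂μ := by gcongr

end MaximalErgodic

lemma integral_mul_eq_zero_of_condExp_eq_zero {X : Type*} {m m₀ : MeasurableSpace X}
    {μ : Measure X} (hm : m ≤ m₀) [SigmaFinite (μ.trim hm)] {f g : X → ℝ}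
    (hg : StronglyMeasurable[m] g) (hgf : Integrable (g * f) μ) (hf : Integrable f μ)
    (hf0 : μ[f | m] =ᵐ[μ] 0) :
    ∫ x, g x * f x ∂μ = 0 :=
  calc ∫ x, g x * f x ∂μ = ∫ x, (μ[g * f | m]) x ∂μ := (integral_condExp hm).symm
    _ = ∫ x, (g * μ[f | m]) x ∂μ :=
        integral_congr_ae (condExp_mul_of_stronglyMeasurable_left hg hgf hf)
    _ = 0 := integral_eq_zero_of_ae (by filter_upwards [hf0] with x hx; simp [hx])

section MeanErgodic

variable {X : Type*} [MeasurableSpace X] {μ : Measure X} {T : X → X}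

lemma invSigma_le (T : X → X) : invSigma T ≤ ‹MeasurableSpace X› := fun _ hs => hs.1

/-- The strictly invariant version is `x ↦ limsup_n g (T^[n] x)`. -/
lemma exists_stronglyMeasurable_invSigma_ae_eq (hT : Measure.QuasiMeasurePreserving T μ μ)
    {g : X → ℝ} (hg : Measurable g) (hgT : g ∘ T =ᵐ[μ] g) :
    ∃ g' : X → ℝ, StronglyMeasurable[invSigma T] g' ∧ g =ᵐ[μ] g' := by
  have hiter : ∀ n, g ∘ T^[n] =ᵐ[μ] g := by
    intro n
    induction n with
    | zero => rfl
    | succ n ih =>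
      rw [iterate_succ, ← Function.comp_assoc]
      exact (hT.ae_eq_comp ih).trans hgT
  set g' : X → ℝ := fun x => limsup (fun n => g (T^[n] x)) atTop
  have hg'T : g' ∘ T = g' := funext fun x => by
    simpa only [g', comp_apply, ← iterate_succ_apply] using limsup_nat_add (fun n => g (T^[n] x)) 1
  have hg'm : Measurable g' := Measurable.limsup fun n => hg.comp (hT.measurable.iterate n)
  refine ⟨g', Measurable.stronglyMeasurable fun s hs => ⟨hg'm hs, ?_⟩, ?_⟩
  · rw [← preimage_comp, hg'T]
  · filter_upwards [ae_all_iff.mpr hiter] with x hx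
    simp only [g', comp_apply] at hx ⊢
    simp [hx]

lemma coeFn_birkhoffAverage_compMeasurePreserving (hT : MeasurePreserving T μ μ)
    {p : ℝ≥0∞} (F : Lp ℝ p μ) (k : ℕ) :
    ⇑(birkhoffAverage ℝ (Lp.compMeasurePreserving T hT) _root_.id k F)
      =ᵐ[μ] birkhoffAverage ℝ T F k := by
  have hiter : ∀ᵐ x ∂μ, ∀ j, ((Lp.compMeasurePreserving T hT)^[j] F : X → ℝ) x = F (T^[j] x) :=
    ae_all_iff.mpr fun j => by
      rw [Lp.compMeasurePreserving_iterate]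
      exact Lp.coeFn_compMeasurePreserving F (hT.iterate j)
  filter_upwards [Lp.coeFn_smul ((k : ℝ)⁻¹)
      (birkhoffSum (Lp.compMeasurePreserving T hT) _root_.id k F),
    Lp.coeFn_fun_finsetSum (Finset.range k) fun j => (Lp.compMeasurePreserving T hT)^[j] F,
    hiter] with x hsmul hsum hx
  rw [birkhoffAverage, hsmul, Pi.smul_apply, birkhoffSum]
  simp only [_root_.id, hsum, hx]
  rfl

variable [IsFiniteMeasure μ]

lemma inner_eq_zero_of_compMeasurePreserving_eq (hT : MeasurePreserving T μ μ)
    {F G : Lp ℝ 2 μ} (hG : Lp.compMeasurePreserving T hT G = G)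
    (hF : μ[F | invSigma T] =ᵐ[μ] 0) :
    inner ℝ G F = 0 := by
  have hGm := (Lp.aestronglyMeasurable G).aemeasurable
  have hGT : hGm.mk G ∘ T =ᵐ[μ] hGm.mk G := calc
    hGm.mk G ∘ T =ᵐ[μ] G ∘ T := hT.quasiMeasurePreserving.ae_eq_comp hGm.ae_eq_mk.symm
    _ =ᵐ[μ] Lp.compMeasurePreserving T hT G := (Lp.coeFn_compMeasurePreserving G hT).symm
    _ =ᵐ[μ] hGm.mk G := by rw [hG]; exact hGm.ae_eq_mk
  obtain ⟨g, hg, hGg⟩ := exists_stronglyMeasurable_invSigma_ae_eq hT.quasiMeasurePreserving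
    hGm.measurable_mk hGT
  have hGg : (G : X → ℝ) =ᵐ[μ] g := hGm.ae_eq_mk.trans hGg
  have hgF : Integrable (g * ⇑F) μ := ((Lp.memLp G).ae_eq hGg).integrable_mul (Lp.memLp F)
  rw [L2.inner_def, ← integral_mul_eq_zero_of_condExp_eq_zero (invSigma_le T) hg hgF
    ((Lp.memLp F).integrable one_le_two) hF]
  refine integral_congr_ae ?_
  filter_upwards [hGg] with x hx
  simp [hx, mul_comm]

/-- Von Neumann's theorem: the averages tend to the projection of `φ` onto the Koopman-fixed
vectors, and `φ` is orthogonal to those. -/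
theorem tendsto_eLpNorm_birkhoffAverage_of_condExp_eq_zero (hT : MeasurePreserving T μ μ)
    {φ : X → ℝ} (hφ : MemLp φ 2 μ) (hφ0 : μ[φ | invSigma T] =ᵐ[μ] 0) :
    Tendsto (fun k => eLpNorm (birkhoffAverage ℝ T φ k) 2 μ) atTop (𝓝 0) := by
  set U : Lp ℝ 2 μ →L[ℝ] Lp ℝ 2 μ := (Lp.compMeasurePreservingₗᵢ ℝ T hT).toContinuousLinearMap
  set F := hφ.toLp φ
  have hF0 : (U.eqLocus (1 : Lp ℝ 2 μ →L[ℝ] Lp ℝ 2 μ)).orthogonalProjectionOnto F = 0 := by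
    refine Submodule.orthogonalProjectionOnto_eq_zero_iff.mpr fun G hG => ?_
    have hG' : Lp.compMeasurePreserving T hT G = G :=
      (by simpa [U] using hG : Lp.compMeasurePreservingₗᵢ ℝ T hT G = G)
    exact inner_eq_zero_of_compMeasurePreserving_eq hT hG'
      ((condExp_congr_ae hφ.coeFn_toLp).trans hφ0)
  have hU := U.tendsto_birkhoffAverage_orthogonalProjection
    (U.opNorm_le_bound zero_le_one fun G => by simp [U]) F
  rw [hF0] at hU
  have hnorm : Tendsto (fun k => ‖birkhoffAverage ℝ U _root_.id k F‖ₑ) atTop (𝓝 0) := by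
    simpa using hU.enorm
  refine hnorm.congr fun k => ?_
  rw [Lp.enorm_def]
  refine eLpNorm_congr_ae ((coeFn_birkhoffAverage_compMeasurePreserving hT F k).trans ?_)
  exact (hT.quasiMeasurePreserving.birkhoffAverage_ae_eq_of_ae_eq ℝ hφ.coeFn_toLp k)

end MeanErgodic

lemma lintegral_tsum_two_pow_mul_ne_top {X : Type*} [MeasurableSpace X] {μ : Measure X}
    {G : ℕ → X → ℝ≥0∞} (hG : ∀ n, Measurable (G n))
    (hGint : ∀ n, ∫⁻ x, G n x ∂μ ≤ ENNReal.ofReal (4⁻¹ ^ n)) :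
    ∫⁻ x, ∑' n, 2 ^ n * G n x ∂μ ≠ ∞ := by
  refine lt_top_iff_ne_top.mp ?_
  calc ∫⁻ x, ∑' n, 2 ^ n * G n x ∂μ = ∑' n, 2 ^ n * ∫⁻ x, G n x ∂μ := by
        rw [lintegral_tsum fun n => ((hG n).const_mul _).aemeasurable]
        exact tsum_congr fun n => lintegral_const_mul _ (hG n)
    _ ≤ ∑' n, ENNReal.ofReal (2 ^ n) * ENNReal.ofReal (4⁻¹ ^ n) := by
        refine ENNReal.tsum_le_tsum fun n => ?_
        rw [ENNReal.ofReal_pow zero_le_two, ENNReal.ofReal_ofNat]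
        gcongr
        exact hGint n
    _ = ENNReal.ofReal (∑' n, (1 / 2 : ℝ) ^ n) := by
        rw [ENNReal.ofReal_tsum_of_nonneg (fun n => by positivity) summable_geometric_two]
        refine tsum_congr fun n => ?_
        rw [← ENNReal.ofReal_mul (by positivity), ← mul_pow]
        norm_num
    _ < ∞ := ENNReal.ofReal_lt_top

section Domination

variable {X : Type*} [MeasurableSpace X] {μ : Measure X} [IsProbabilityMeasure μ] {T : X → X}
  {φ : X → ℝ} {c : ℝ}

lemma exists_lintegral_birkhoffMaximal_birkhoffAverage_le (hT : MeasurePreserving T μ μ)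
    (hφm : Measurable φ) (hc : 0 < c) (hφ : ∀ x, |φ x| ≤ c) (hφ0 : μ[φ | invSigma T] =ᵐ[μ] 0)
    {δ : ℝ} (hδ : 0 < δ) :
    ∃ K ≠ 0, ∫⁻ x, birkhoffMaximal T (birkhoffAverage ℝ T φ K) x ∂μ ≤ ENNReal.ofReal δ := by
  have hL1 : Tendsto (fun k => ∫⁻ x, ‖birkhoffAverage ℝ T φ k x‖ₑ ∂μ) atTop (𝓝 0) := by
    refine tendsto_of_tendsto_of_tendsto_of_le_of_le tendsto_const_nhds
      (tendsto_eLpNorm_birkhoffAverage_of_condExp_eq_zero hT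
        (MemLp.of_bound hφm.aestronglyMeasurable c (ae_of_all _ hφ)) hφ0)
      (fun _ => zero_le) fun k => ?_
    rw [← eLpNorm_one_eq_lintegral_enorm]
    exact eLpNorm_le_eLpNorm_of_exponent_le one_le_two
      (measurable_birkhoffAverage hT.measurable hφm k).aestronglyMeasurable
  -- With `t = δ / 2`, the maximal inequality gives `t ∫ M ≤ t² + c ‖A_K φ‖₁ ≤ t δ`.
  obtain ⟨K, hK, hK0⟩ := ((hL1.eventually (gt_mem_nhds (ENNReal.ofReal_pos.mpr
    (show 0 < δ ^ 2 / (4 * c) by positivity)))).and (eventually_ne_atTop 0)).exists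
  refine ⟨K, hK0, ?_⟩
  have ht : 0 < δ / 2 := half_pos hδ
  rw [← ENNReal.mul_le_mul_iff_right (ENNReal.ofReal_pos.mpr ht).ne' ENNReal.ofReal_ne_top]
  calc ENNReal.ofReal (δ / 2) * ∫⁻ x, birkhoffMaximal T (birkhoffAverage ℝ T φ K) x ∂μ
      ≤ ENNReal.ofReal (δ / 2) ^ 2
          + ENNReal.ofReal c * ∫⁻ x, ‖birkhoffAverage ℝ T φ K x‖ₑ ∂μ :=
        ofReal_mul_lintegral_birkhoffMaximal_le hT (measurable_birkhoffAverage hT.measurable hφm K)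
          (abs_birkhoffAverage_le hφ K) ht
    _ ≤ ENNReal.ofReal (δ / 2) ^ 2 + ENNReal.ofReal c * ENNReal.ofReal (δ ^ 2 / (4 * c)) := by
        gcongr
    _ = ENNReal.ofReal (δ / 2) * ENNReal.ofReal δ := by
        rw [← ENNReal.ofReal_pow ht.le, ← ENNReal.ofReal_mul hc.le, ← ENNReal.ofReal_add
          (by positivity) (by positivity), ← ENNReal.ofReal_mul ht.le]
        congr 1
        field_simp
        ring

/-- `H = ∑ 2ⁿ Gₙ`, where `Gₙ` is the ergodic maximal function of `A_{Kₙ} φ` and `∫ Gₙ ≤ 4⁻ⁿ`. -/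
theorem exists_enorm_birkhoffAverage_le (hT : MeasurePreserving T μ μ) (hφm : Measurable φ)
    (hc : 0 < c) (hφ : ∀ x, |φ x| ≤ c) (hφ0 : μ[φ | invSigma T] =ᵐ[μ] 0) :
    ∃ H : X → ℝ≥0∞, Measurable H ∧ ∫⁻ x, H x ∂μ ≠ ∞ ∧ ∀ n : ℕ, ∀ η > 0, ∀ᶠ k in atTop,
      ∀ y, ‖birkhoffAverage ℝ T φ k y‖ₑ ≤ 2⁻¹ ^ n * H y + η := by
  choose K hK0 hK using fun n : ℕ =>
    exists_lintegral_birkhoffMaximal_birkhoffAverage_le hT hφm hc hφ hφ0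
      (show (0 : ℝ) < 4⁻¹ ^ n by positivity)
  set G : ℕ → X → ℝ≥0∞ := fun n => birkhoffMaximal T (birkhoffAverage ℝ T φ (K n))
  have hGm : ∀ n, Measurable (G n) := fun n =>
    measurable_birkhoffMaximal hT.measurable (measurable_birkhoffAverage hT.measurable hφm _)
  refine ⟨fun y => ∑' n, 2 ^ n * G n y, .tsum fun n => (hGm n).const_mul _,
    lintegral_tsum_two_pow_mul_ne_top hGm hK, fun n η hη => ?_⟩
  have herr : Tendsto (fun k : ℕ => ENNReal.ofReal (2 * K n * c / k)) atTop (𝓝 0) := by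
    simpa using ENNReal.tendsto_ofReal (tendsto_const_div_atTop_nhds_zero_nat (2 * K n * c))
  filter_upwards [herr.eventually (gt_mem_nhds hη)] with k hk y
  calc ‖birkhoffAverage ℝ T φ k y‖ₑ ≤ G n y + η :=
        (enorm_birkhoffAverage_le_birkhoffMaximal_add hφ (hK0 n) k y).trans (by gcongr)
    _ = 2⁻¹ ^ n * (2 ^ n * G n y) + η := by
        rw [← mul_assoc, ← mul_pow, ENNReal.inv_mul_cancel two_ne_zero ENNReal.ofNat_ne_top,
          one_pow, one_mul]
    _ ≤ 2⁻¹ ^ n * ∑' m, 2 ^ m * G m y + η := by gcongr; exact ENNReal.le_tsum n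

end Domination

section Integrals

variable {X : Type*} [MeasurableSpace X] {μ : Measure X}

lemma MemLp.exists_measurable_abs_le_ae_eq {f : X → ℝ} (hf : MemLp f ∞ μ) :
    ∃ φ : X → ℝ, ∃ c > 0, Measurable φ ∧ (∀ x, |φ x| ≤ c) ∧ f =ᵐ[μ] φ := by
  set c := lpNorm f ∞ μ + 1
  have hc : 0 < c := by linarith [lpNorm_nonneg (f := f) (p := ∞) (μ := μ)]
  set g := hf.1.mk f
  refine ⟨fun x => max (-c) (min c (g x)), c, hc,
    measurable_const.max (measurable_const.min hf.1.stronglyMeasurable_mk.measurable),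
    fun x => abs_le.mpr ⟨le_max_left _ _, max_le (by linarith) (min_le_left _ _)⟩, ?_⟩
  filter_upwards [hf.1.ae_eq_mk, ae_le_lpNorm_exponent_top hf] with x hx hfx
  rw [Real.norm_eq_abs, abs_le] at hfx
  simp only [g, ← hx]
  rw [min_eq_right (by linarith), max_eq_right (by linarith)]

lemma ofReal_abs_toReal_inv_mul_setIntegral_le (s : Set X) (u : X → ℝ) :
    ENNReal.ofReal |(μ s).toReal⁻¹ * ∫ y in s, u y ∂μ| ≤ (μ s)⁻¹ * ∫⁻ y in s, ‖u y‖ₑ ∂μ := by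
  rw [abs_mul, ENNReal.ofReal_mul (abs_nonneg _), abs_of_nonneg (by positivity),
    ← ENNReal.toReal_inv, ← Real.enorm_eq_ofReal_abs]
  gcongr
  · exact ENNReal.ofReal_toReal_le
  · exact enorm_integral_le_lintegral_enorm _

lemma inv_mul_setLIntegral_le_of_le {s : Set X} {u H : X → ℝ≥0∞} {a b : ℝ≥0∞}
    (hH : AEMeasurable H (μ.restrict s)) (hu : ∀ y, u y ≤ a * H y + b) :
    (μ s)⁻¹ * ∫⁻ y in s, u y ∂μ ≤ a * ((μ s)⁻¹ * ∫⁻ y in s, H y ∂μ) + b :=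
  calc (μ s)⁻¹ * ∫⁻ y in s, u y ∂μ ≤ (μ s)⁻¹ * ∫⁻ y in s, (a * H y + b) ∂μ := by
        gcongr; exact hu _
    _ = a * ((μ s)⁻¹ * ∫⁻ y in s, H y ∂μ) + b * ((μ s)⁻¹ * μ s) := by
        rw [lintegral_add_right _ measurable_const, lintegral_const_mul'' _ hH, setLIntegral_const]
        ring
    _ ≤ a * ((μ s)⁻¹ * ∫⁻ y in s, H y ∂μ) + b := by
        gcongr
        exact mul_le_of_le_one_right' (ENNReal.inv_mul_le_one _)

end Integrals

section HardyLittlewood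

variable {X : Type*} [PseudoMetricSpace X] [MeasurableSpace X] {μ : Measure X}

def ballMaximal (μ : Measure X) (H : X → ℝ≥0∞) (x : X) : ℝ≥0∞ :=
  ⨆ (r : ℝ) (_ : 0 < r), (μ (ball x r))⁻¹ * ∫⁻ y in ball x r, H y ∂μ

lemma le_ballMaximal (H : X → ℝ≥0∞) (x : X) {r : ℝ} (hr : 0 < r) :
    (μ (ball x r))⁻¹ * ∫⁻ y in ball x r, H y ∂μ ≤ ballMaximal μ H x :=
  le_iSup₂ (f := fun (r : ℝ) (_ : 0 < r) => (μ (ball x r))⁻¹ * ∫⁻ y in ball x r, H y ∂μ) r hr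

/-- The weak type bound at level `ε = ∞` says that `{ballMaximal μ H = ∞}` is null. -/
lemma HLProp.ae_ballMaximal_lt_top (hHL : HLProp μ) {H : X → ℝ≥0∞} (hH : AEMeasurable H μ)
    (hHint : ∫⁻ x, H x ∂μ ≠ ∞) : ∀ᵐ x ∂μ, ballMaximal μ H x < ∞ := by
  obtain ⟨C, -, hC⟩ := hHL
  have hnorm : ∀ᵐ y ∂μ, (‖(H y).toReal‖₊ : ℝ≥0∞) = H y := (ae_lt_top' hH hHint).mono fun y hy => by
    rw [← enorm_eq_nnnorm, Real.enorm_of_nonneg ENNReal.toReal_nonneg, ENNReal.ofReal_toReal hy.ne]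
  have hmax : ∀ x, ballMaximal μ H x = ⨆ (r : ℝ) (_ : 0 < r),
      (μ (ball x r))⁻¹ * ∫⁻ y in ball x r, ‖(H y).toReal‖₊ ∂μ := fun x => by
    simp only [ballMaximal, lintegral_congr_ae (ae_restrict_of_ae hnorm)]
  have hnull := hC (fun y => (H y).toReal) (integrable_toReal_of_lintegral_ne_top hH hHint) ⊤
    ENNReal.zero_lt_top
  rw [ENNReal.div_top, zero_mul, nonpos_iff_eq_zero] at hnull
  rw [ae_iff]
  simpa [hmax, top_le_iff, lt_top_iff_ne_top] using hnull

end HardyLittlewood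

theorem stmt5_general {X : Type*} [MetricSpace X] [MeasurableSpace X]
    (μ : Measure X) [IsProbabilityMeasure μ] (hHL : HLProp μ)
    (T : X → X) (hT : MeasurePreserving T μ μ)
    (f : X → ℝ) (hf : MemLp f ⊤ μ) (hf0 : μ[f | invSigma T] =ᵐ[μ] 0) :
    ∀ᵐ x ∂μ, ∀ ε > (0:ℝ), ∃ r₀ > (0:ℝ), ∃ K : ℕ, ∀ r, 0 < r → r < r₀ → ∀ k ≥ K,
      |(μ (ball x r)).toReal⁻¹ *
          ∫ y in ball x r, (k:ℝ)⁻¹ * ∑ j ∈ Finset.range k, f (T^[j] y) ∂μ| < ε := by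
  obtain ⟨φ, c, hc, hφm, hφ, hfφ⟩ := MemLp.exists_measurable_abs_le_ae_eq hf
  obtain ⟨H, hHm, hHint, hdom⟩ := exists_enorm_birkhoffAverage_le hT hφm hc hφ
    ((condExp_congr_ae hfφ).symm.trans hf0)
  filter_upwards [hHL.ae_ballMaximal_lt_top hHm.aemeasurable hHint] with x hx ε hε
  have hε2 : 0 < ENNReal.ofReal (ε / 2) := ENNReal.ofReal_pos.mpr (half_pos hε)
  obtain ⟨n, hn⟩ : ∃ n : ℕ, 2⁻¹ ^ n * ballMaximal μ H x < ENNReal.ofReal (ε / 2) := by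
    have h2 := ENNReal.Tendsto.mul_const (ENNReal.tendsto_pow_atTop_nhds_zero_of_lt_one
      (ENNReal.inv_lt_one.mpr one_lt_two)) (Or.inr hx.ne)
    rw [zero_mul] at h2
    exact (h2.eventually (gt_mem_nhds hε2)).exists
  obtain ⟨K, hK⟩ := (hdom n _ hε2).exists_forall_of_atTop
  refine ⟨1, one_pos, K, fun r hr _ k hk => ?_⟩
  change |_ * ∫ y in ball x r, birkhoffAverage ℝ T f k y ∂μ| < ε
  rw [integral_congr_ae (ae_restrict_of_ae
    (hT.quasiMeasurePreserving.birkhoffAverage_ae_eq_of_ae_eq ℝ hfφ k))]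
  refine (ENNReal.ofReal_lt_ofReal_iff hε).mp
    ((ofReal_abs_toReal_inv_mul_setIntegral_le _ _).trans_lt ?_)
  calc (μ (ball x r))⁻¹ * ∫⁻ y in ball x r, ‖birkhoffAverage ℝ T φ k y‖ₑ ∂μ
      ≤ 2⁻¹ ^ n * ((μ (ball x r))⁻¹ * ∫⁻ y in ball x r, H y ∂μ) + ENNReal.ofReal (ε / 2) :=
        inv_mul_setLIntegral_le_of_le hHm.aemeasurable (hK k hk)
    _ ≤ 2⁻¹ ^ n * ballMaximal μ H x + ENNReal.ofReal (ε / 2) := by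
        gcongr; exact le_ballMaximal H x hr
    _ < ENNReal.ofReal (ε / 2) + ENNReal.ofReal (ε / 2) :=
        ENNReal.add_lt_add_right ENNReal.ofReal_ne_top hn
    _ = ENNReal.ofReal ε := by rw [← ENNReal.ofReal_add (by positivity) (by positivity), add_halves]

theorem stmt5 {X : Type*} [MetricSpace X] [MeasurableSpace X] [BorelSpace X]
    (μ : Measure X) [IsProbabilityMeasure μ] (hHL : HLProp μ)
    (hball : ∀ (x : X) (r : ℝ), 0 < r → 0 < μ (ball x r))
    (T : X → X) (hT : MeasurePreserving T μ μ)
    (f : X → ℝ) (hf : MemLp f ⊤ μ) (hf0 : μ[f | invSigma T] =ᵐ[μ] 0) :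
    ∀ᵐ x ∂μ, ∀ ε > (0:ℝ), ∃ r₀ > (0:ℝ), ∃ K : ℕ, ∀ r, 0 < r → r < r₀ → ∀ k ≥ K,
      |(μ (ball x r)).toReal⁻¹ *
          ∫ y in ball x r, (k:ℝ)⁻¹ * ∑ j ∈ Finset.range k, f (T^[j] y) ∂μ| < ε :=
  stmt5_general μ hHL T hT f hf hf0
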